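/- Let a, b ∈ {1, 3} ⊆ ℤ/4ℤ and R = R_{a+bw}, and let n ≥ 1. If C ⊆ Rⁿ is a self-dual linear code (C = C^⊥), then the all-2 vector (2, 2, …, 2) belongs to C; consequently the all-2w vector and the all-(2+2w) vector also belong to C. -/

import Mathlib

open Polynomial

/-- The base ring ℤ/4ℤ. -/
abbrev Z4 := ZMod 4

/-- The polynomial X² − (a + bX) over ℤ/4ℤ. -/
noncomputable def wPoly (a b : Z4) : Z4[X] := X ^ 2 - (C b * X + C a)

/-- The ring R_{a+bw} = (ℤ/4ℤ)[X]/(X² − (a + bX)); every element is uniquely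
x₀ + x₁·w with x₀, x₁ ∈ ℤ/4ℤ, and w² = a + b·w. -/
abbrev Rw (a b : Z4) : Type := AdjoinRoot (wPoly a b)

/-- The element w of R_{a+bw}. -/
noncomputable def ww (a b : Z4) : Rw a b := AdjoinRoot.root _

/-!
For `y ∈ C`, self-duality gives `∑ yᵢ² = 0`, so `(∑ yᵢ)² ∈ 2R`. When `a` and `b` are odd,
`R / 2R ≅ 𝔽₂[w]/(w² + w + 1) ≅ 𝔽₄` is a field, hence `∑ yᵢ ∈ 2R` and `2 ∑ yᵢ = 0`. So the
all-2 vector is orthogonal to `C`, lies in `C^⊥ = C`, and so do its multiples by `w` and `1 + w`.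
-/

theorem Finset.exists_sq_sum_eq_sum_sq_add_two_mul {ι R : Type*} [CommRing R]
    (s : Finset ι) (f : ι → R) : ∃ z, (∑ i ∈ s, f i) ^ 2 = ∑ i ∈ s, f i ^ 2 + 2 * z := by
  classical
  induction s using Finset.induction_on with
  | empty => exact ⟨0, by simp⟩
  | insert j s hj ih =>
    obtain ⟨z, hz⟩ := ih
    refine ⟨z + f j * ∑ i ∈ s, f i, ?_⟩
    rw [Finset.sum_insert hj, Finset.sum_insert hj, add_sq, hz]
    ring

namespace AdjoinRoot

variable {R : Type*} [CommRing R] {g : R[X]}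

theorem exists_eq_of_add_of_mul_root (hg : g.Monic) (hdeg : g.natDegree = 2)
    (x : AdjoinRoot g) : ∃ u v : R, x = of g u + of g v * root g := by
  obtain ⟨p, rfl⟩ := mk_surjective x
  have hp : (p %ₘ g).degree ≤ 1 := by
    have := natDegree_modByMonic_lt p hg (fun h => by simp [h] at hdeg)
    exact degree_le_of_natDegree_le (by omega : (p %ₘ g).natDegree ≤ 1)
  refine ⟨(p %ₘ g).coeff 0, (p %ₘ g).coeff 1, ?_⟩
  rw [← mk_leftInverse hg (mk g p), modByMonicHom_mk]
  conv_lhs => rw [eq_X_add_C_of_degree_le_one hp]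
  simp only [map_add, map_mul, mk_C, mk_X]
  ring

theorem of_add_of_mul_root_eq_zero_iff (hg : g.Monic) (hdeg : g.natDegree = 2) {u v : R} :
    of g u + of g v * root g = 0 ↔ u = 0 ∧ v = 0 := by
  refine ⟨fun h => ?_, fun ⟨hu, hv⟩ => by simp [hu, hv]⟩
  have hlin : C v * X + C u = 0 := by
    nontriviality R
    have hlt : (C v * X + C u).degree < g.degree := by
      rw [degree_eq_natDegree hg.ne_zero, hdeg]; compute_degree!
    calc C v * X + C u = modByMonicHom hg (mk g (C v * X + C u)) :=
          ((modByMonic_eq_self_iff hg).2 hlt).symm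
      _ = modByMonicHom hg 0 := by
          rw [← h, add_comm, map_add (mk g), map_mul (mk g), mk_C, mk_C, mk_X]
      _ = 0 := map_zero _
  exact ⟨by simpa using congrArg (coeff · 0) hlin, by simpa using congrArg (coeff · 1) hlin⟩

end AdjoinRoot

lemma monic_wPoly (a b : Z4) : (wPoly a b).Monic := by
  unfold wPoly; monicity!

lemma natDegree_wPoly (a b : Z4) : (wPoly a b).natDegree = 2 := by
  unfold wPoly; compute_degree!

lemma root_wPoly_sq (a b : Z4) :
    AdjoinRoot.root (wPoly a b) ^ 2 =
      AdjoinRoot.of _ a + AdjoinRoot.of _ b * AdjoinRoot.root (wPoly a b) := by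
  have h : AdjoinRoot.mk (wPoly a b) (X ^ 2 - (C b * X + C a)) = 0 := AdjoinRoot.mk_self
  simp only [map_sub, map_pow, map_add, map_mul, AdjoinRoot.mk_X, AdjoinRoot.mk_C] at h
  linear_combination h

-- `h₀`, `h₁` say that both coordinates of `(u + v w)² = (u² + a v²) + (2uv + b v²) w` are even.
lemma Z4.two_mul_eq_zero_of_coeffs_sq_even {a b u v z₀ z₁ : Z4}
    (ha : a = 1 ∨ a = 3) (hb : b = 1 ∨ b = 3)
    (h₀ : u ^ 2 + a * v ^ 2 = 2 * z₀) (h₁ : 2 * u * v + b * v ^ 2 = 2 * z₁) :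
    2 * u = 0 ∧ 2 * v = 0 := by
  revert a b u v z₀ z₁
  decide

theorem two_mul_eq_zero_of_sq_eq_two_mul {a b : Z4} (ha : a = 1 ∨ a = 3) (hb : b = 1 ∨ b = 3)
    {s z : Rw a b} (h : s ^ 2 = 2 * z) : 2 * s = 0 := by
  have hg := monic_wPoly a b
  have hdeg := natDegree_wPoly a b
  set w := AdjoinRoot.root (wPoly a b)
  set ι := AdjoinRoot.of (wPoly a b)
  obtain ⟨u, v, rfl⟩ := AdjoinRoot.exists_eq_of_add_of_mul_root hg hdeg s
  obtain ⟨z₀, z₁, rfl⟩ := AdjoinRoot.exists_eq_of_add_of_mul_root hg hdeg z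
  have hcoeffs :
      ι (u ^ 2 + a * v ^ 2 - 2 * z₀) + ι (2 * u * v + b * v ^ 2 - 2 * z₁) * w = 0 := by
    simp only [map_sub, map_add, map_mul, map_pow, map_ofNat]
    linear_combination h - ι v ^ 2 * root_wPoly_sq a b
  obtain ⟨h₀, h₁⟩ := (AdjoinRoot.of_add_of_mul_root_eq_zero_iff hg hdeg).1 hcoeffs
  obtain ⟨hu, hv⟩ :=
    Z4.two_mul_eq_zero_of_coeffs_sq_even ha hb (sub_eq_zero.1 h₀) (sub_eq_zero.1 h₁)
  calc 2 * (ι u + ι v * w) = ι (2 * u) + ι (2 * v) * w := by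
        simp only [map_mul, map_ofNat]; ring
    _ = 0 := by rw [hu, hv, map_zero, zero_mul, add_zero]

theorem self_dual_contains_all_two_general (a b : Z4) (ha : a = 1 ∨ a = 3) (hb : b = 1 ∨ b = 3)
    (n : ℕ) (C : Submodule (Rw a b) (Fin n → Rw a b))
    (hsd : ∀ x : Fin n → Rw a b, x ∈ C ↔ ∀ y ∈ C, ∑ i, x i * y i = 0) :
    (fun _ : Fin n => (2 : Rw a b)) ∈ C ∧
    (fun _ : Fin n => 2 * ww a b) ∈ C ∧
    (fun _ : Fin n => 2 + 2 * ww a b) ∈ C := by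
  have two_mul_sum : ∀ y ∈ C, 2 * ∑ i, y i = 0 := fun y hy => by
    have hsq : ∑ i, y i ^ 2 = 0 := by simpa only [sq] using (hsd y).1 hy y hy
    obtain ⟨z, hz⟩ := Finset.univ.exists_sq_sum_eq_sum_sq_add_two_mul y
    exact two_mul_eq_zero_of_sq_eq_two_mul ha hb (by rw [hz, hsq, zero_add])
  have hall2 : (fun _ : Fin n => (2 : Rw a b)) ∈ C :=
    (hsd _).2 fun y hy => by rw [← Finset.mul_sum, two_mul_sum y hy]
  refine ⟨hall2, ?_, ?_⟩
  · convert C.smul_mem (ww a b) hall2 using 1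
    ext; rw [Pi.smul_apply, smul_eq_mul]; ring
  · convert C.smul_mem (1 + ww a b) hall2 using 1
    ext; rw [Pi.smul_apply, smul_eq_mul]; ring

/-- for a, b ∈ {1,3} ⊆ ℤ/4ℤ, every self-dual linear code C ⊆ Rⁿ contains
the all-2 vector; consequently it also contains the all-2w and all-(2+2w) vectors. -/
theorem self_dual_contains_all_two (a b : Z4) (ha : a = 1 ∨ a = 3) (hb : b = 1 ∨ b = 3)
    (n : ℕ) (hn : 1 ≤ n) (C : Submodule (Rw a b) (Fin n → Rw a b))
    (hsd : ∀ x : Fin n → Rw a b, x ∈ C ↔ ∀ y ∈ C, ∑ i, x i * y i = 0) :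
    (fun _ : Fin n => (2 : Rw a b)) ∈ C ∧
    (fun _ : Fin n => 2 * ww a b) ∈ C ∧
    (fun _ : Fin n => 2 + 2 * ww a b) ∈ C :=
  self_dual_contains_all_two_general a b ha hb n C hsd
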